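/- arXiv:2301.12615 — 4 statements merged into one kernel-verified Lean document; each statement's English description precedes it below -/
import Mathlib

section
/- For x ≥ 2, the sum of log p / p over primes p ≤ x equals log x + O(1); i.e., there is an absolute constant C such that |∑_{p ≤ x, p prime} (log p)/p − log x| ≤ C for all x ≥ 2. -/
/-!
By Legendre's formula, `log n! = ∑_{p ≤ n} v_p(n!) log p` with `n/p - 1 ≤ v_p(n!) ≤ n/(p-1)`.
Compare with `n log n - n ≤ log n! ≤ n log n`: the lower bound on `v_p(n!)`, together with
Chebyshev's `θ(n) ≤ n log 4`, bounds `∑_{p ≤ n} log p / p` above by `log n + log 4`; the upper bound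
exceeds `n ∑_{p ≤ n} log p / p` by `n ∑_p log p / (p (p - 1)) = O(n)`, which bounds it below.
-/

open Finset Real Chebyshev
open scoped Nat

theorem Nat.div_le_factorization_factorial {p : ℕ} (hp : p.Prime) (n : ℕ) :
    n / p ≤ (n !).factorization p := by
  rcases Nat.eq_zero_or_pos n with rfl | hn
  · simp
  rw [Nat.factorization_factorial hp ((Nat.log_le_self p n).trans_lt n.lt_succ_self)]
  simpa using single_le_sum (f := fun i => n / p ^ i) (fun _ _ => Nat.zero_le _)
    (mem_Ico.2 ⟨le_rfl, Nat.succ_lt_succ hn⟩)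

theorem Real.log_factorial_eq_sum_primesLE (n : ℕ) :
    log n ! = ∑ p ∈ Nat.primesLE n, (n !).factorization p * log p := by
  rw [log_nat_eq_sum_factorization, Finsupp.sum_of_support_subset]
  · intro p hp
    rw [Nat.support_factorization, Nat.mem_primeFactors] at hp
    simp only [Nat.primesLE_eq_filter_range, mem_filter, mem_range]
    exact ⟨Nat.lt_succ_of_le ((hp.1.dvd_factorial).1 hp.2.1), hp.1⟩
  · simp

theorem Real.log_factorial_le_mul_log (n : ℕ) : log n ! ≤ n * log n := by
  rcases Nat.eq_zero_or_pos n with rfl | hn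
  · simp
  rw [← log_pow]
  exact log_le_log (by positivity) (mod_cast Nat.factorial_le_pow n)

theorem Real.mul_log_sub_le_log_factorial (n : ℕ) : n * log n - n ≤ log n ! := by
  rcases Nat.eq_zero_or_pos n with rfl | hn
  · simp
  have h2π : 0 ≤ log (2 * π) := log_nonneg (by linarith [pi_gt_three])
  linarith [Stirling.le_log_factorial_stirling hn.ne', log_natCast_nonneg n]

theorem Real.log_div_mul_sub_one_le {x : ℝ} (hx : 2 ≤ x) :
    log x / (x * (x - 1)) ≤ 4 * (x ^ (3 / 2 : ℝ))⁻¹ := by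
  have hx0 : 0 < x := by linarith
  set s := x ^ (1 / 2 : ℝ)
  have hss : s * s = x := by rw [← rpow_add hx0]; norm_num
  have h32 : x ^ (3 / 2 : ℝ) = x * s := by
    rw [show (3 / 2 : ℝ) = 1 + 1 / 2 by norm_num, rpow_add hx0, rpow_one]
  have hlog : log x ≤ 2 * s :=
    (log_le_rpow_div hx0.le (by norm_num : (0 : ℝ) < 1 / 2)).trans_eq (by ring)
  calc log x / (x * (x - 1)) ≤ 2 * s / (x ^ 2 / 2) := by
        gcongr
        nlinarith
    _ = 4 * (x ^ (3 / 2 : ℝ))⁻¹ := by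
        rw [h32, ← hss]
        field_simp
        ring

theorem summable_log_div_mul_sub_one : Summable fun m : ℕ => log m / (m * (m - 1)) := by
  rw [← summable_nat_add_iff 2]
  have hm : ∀ m : ℕ, (2 : ℝ) ≤ ((m + 2 : ℕ) : ℝ) := fun m => by
    push_cast
    linarith [m.cast_nonneg (α := ℝ)]
  refine Summable.of_nonneg_of_le (fun m => ?_) (fun m => log_div_mul_sub_one_le (hm m))
    (((summable_nat_add_iff 2).2 (summable_nat_rpow_inv.2 (by norm_num))).mul_left 4)
  exact div_nonneg (log_natCast_nonneg _) (by nlinarith [hm m])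

theorem sum_primesLE_log_div_le_log_add_log_four {n : ℕ} (hn : 0 < n) :
    ∑ p ∈ Nat.primesLE n, log p / p ≤ log n + log 4 := by
  have hn' : (0 : ℝ) < n := mod_cast hn
  have key : n * ∑ p ∈ Nat.primesLE n, log p / p - θ n ≤ log n ! := by
    rw [theta_eq_sum_primesLE_log, mul_sum, ← sum_sub_distrib, log_factorial_eq_sum_primesLE]
    gcongr with p hp
    have hp := Nat.prime_of_mem_primesLE hp
    calc n * (log p / p) - log p = ((n : ℝ) / p - 1) * log p := by ring
      _ ≤ (n !).factorization p * log p := by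
        gcongr
        calc (n : ℝ) / p - 1 ≤ (n / p : ℕ) := by
              rw [← Nat.floor_div_eq_div (K := ℝ)]
              linarith [Nat.lt_floor_add_one ((n : ℝ) / p)]
          _ ≤ (n !).factorization p := mod_cast Nat.div_le_factorization_factorial hp n
  refine le_of_mul_le_mul_left ?_ hn'
  linarith [theta_le_log4_mul_x hn'.le, log_factorial_le_mul_log n]

theorem exists_log_sub_le_sum_primesLE_log_div :
    ∃ K : ℝ, ∀ n : ℕ, 0 < n → log n - K ≤ ∑ p ∈ Nat.primesLE n, log p / p := by
  set f : ℕ → ℝ := fun m => log m / (m * (m - 1))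
  refine ⟨1 + ∑' m, f m, fun n hn => ?_⟩
  have hn' : (0 : ℝ) < n := mod_cast hn
  have key : log n ! ≤ n * ∑ p ∈ Nat.primesLE n, log p / p + n * ∑ p ∈ Nat.primesLE n, f p := by
    rw [log_factorial_eq_sum_primesLE, mul_sum, mul_sum, ← sum_add_distrib]
    gcongr with p hp
    have hp := Nat.prime_of_mem_primesLE hp
    have hp0 : (p : ℝ) ≠ 0 := mod_cast hp.ne_zero
    have hp1 : (p : ℝ) - 1 ≠ 0 := sub_ne_zero.2 (mod_cast hp.ne_one)
    calc ((n !).factorization p : ℝ) * log p ≤ n / (p - 1) * log p := by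
          gcongr
          calc ((n !).factorization p : ℝ) ≤ (n / (p - 1) : ℕ) :=
                mod_cast Nat.factorization_factorial_le_div_pred hp n
            _ ≤ n / (p - 1) := by
                rw [← Nat.cast_pred hp.pos]
                exact Nat.cast_div_le
      _ = n * (log p / p) + n * f p := by
          simp only [f]
          field_simp
          ring
  have hf : ∑ p ∈ Nat.primesLE n, f p ≤ ∑' m, f m := by
    refine summable_log_div_mul_sub_one.sum_le_tsum _ (fun m _ => ?_)
    rcases m with _ | m
    · simp [f]
    · exact div_nonneg (log_natCast_nonneg _) (by push_cast; nlinarith [m.cast_nonneg (α := ℝ)])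
  refine le_of_mul_le_mul_left ?_ hn'
  nlinarith [mul_log_sub_le_log_factorial n]

theorem Real.log_le_log_natFloor_add_log_two {x : ℝ} (hx : 1 ≤ x) :
    log x ≤ log ⌊x⌋₊ + log 2 := by
  have hn : (1 : ℝ) ≤ ⌊x⌋₊ := mod_cast Nat.one_le_floor_iff x |>.2 hx
  rw [← log_mul (by positivity) two_ne_zero]
  exact log_le_log (by linarith) (by linarith [Nat.lt_floor_add_one x])

/-- Mertens' first theorem: `∑_{p ≤ x} (log p)/p = log x + O(1)` for `x ≥ 2`. -/
theorem mertens_first :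
    ∃ C : ℝ, ∀ x : ℝ, 2 ≤ x →
      |(∑ p ∈ (Finset.range (⌊x⌋₊ + 1)).filter Nat.Prime, Real.log p / p) - Real.log x| ≤ C := by
  obtain ⟨K, hK⟩ := exists_log_sub_le_sum_primesLE_log_div
  refine ⟨max (log 4) K + log 2, fun x hx => ?_⟩
  have hn : 0 < ⌊x⌋₊ := Nat.floor_pos.2 (by linarith)
  have hlower := hK _ hn
  have hupper := sum_primesLE_log_div_le_log_add_log_four hn
  have hfloor : log ⌊x⌋₊ ≤ log x := log_le_log (by positivity) (Nat.floor_le (by linarith))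
  have hfloor' := log_le_log_natFloor_add_log_two (by linarith : 1 ≤ x)
  rw [← Nat.primesLE_eq_filter_range, abs_le]
  constructor <;> linarith [le_max_left (log 4) K, le_max_right (log 4) K, log_nonneg one_le_two]
end

section
/- For an odd positive integer k and an integer m, define G_m(k) = ((1−i)/2 + (−1/k)(1+i)/2) · ∑_{a mod k} (a/k) e(am/k), where (·/k) is the Jacobi symbol and e(z) = exp(2πiz). Then G_m is multiplicative in the sense that if k₁, k₂ are odd positive integers with gcd(k₁,k₂) = 1, then G_m(k₁k₂) = G_m(k₁) G_m(k₂). -/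
/-!
Write `G_m(k) = ε_k S_m(k)`. Writing residues mod `k₁k₂` as `a₁k₂ + a₂k₁` (Chinese remainder
theorem) factors each term of `S_m(k₁k₂)`, so that `S_m(k₁k₂) = (k₂/k₁)(k₁/k₂) S_m(k₁) S_m(k₂)`.
By quadratic reciprocity the twist `(k₂/k₁)(k₁/k₂)` is `-1` exactly when `k₁ ≡ k₂ ≡ 3 mod 4`.
Since `ε_k` is `1` or `-i` according as `k ≡ 1` or `3 mod 4`, the prefactors produce the same
sign: `ε_{k₁k₂} (k₂/k₁)(k₁/k₂) = ε_{k₁} ε_{k₂}`.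
-/

open scoped Real

/-- The Gauss-type sum `G_m(k)` of Soundararajan. -/
noncomputable def gaussG (m : ℤ) (k : ℕ) : ℂ :=
  ((1 - Complex.I) / 2 + (jacobiSym (-1) k : ℂ) * (1 + Complex.I) / 2) *
    ∑ a ∈ Finset.range k, (jacobiSym a k : ℂ) * Complex.exp (2 * π * Complex.I * a * m / k)

open Finset Function Complex
open scoped NumberTheorySymbols

theorem Nat.eq_of_mul_add_mul_modEq {k k' a b c d : ℕ} (hco : k.Coprime k') (ha : a < k)
    (hb : b < k) (h : a * k' + c * k ≡ b * k' + d * k [MOD k]) : a = b := by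
  have h' : a * k' ≡ b * k' [MOD k] := by
    simpa only [Nat.ModEq, Nat.add_mul_mod_self_right] using h
  exact (Nat.ModEq.cancel_right_of_coprime hco h').eq_of_lt_of_lt ha hb

theorem Function.Periodic.sum_range_mul_of_coprime {M : Type*} [AddCommMonoid M] {f : ℕ → M}
    {k₁ k₂ : ℕ} (hf : Periodic f (k₁ * k₂)) (hco : k₁.Coprime k₂) :
    ∑ a ∈ range (k₁ * k₂), f a = ∑ a₁ ∈ range k₁, ∑ a₂ ∈ range k₂, f (a₁ * k₂ + a₂ * k₁) := by
  rcases Nat.eq_zero_or_pos (k₁ * k₂) with h0 | hpos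
  · rcases Nat.mul_eq_zero.mp h0 with h | h <;> simp [h]
  rw [← sum_product', eq_comm]
  set crt : ℕ × ℕ → ℕ := fun p => (p.1 * k₂ + p.2 * k₁) % (k₁ * k₂)
  have hmaps : Set.MapsTo crt (range k₁ ×ˢ range k₂ : Finset _) (range (k₁ * k₂)) :=
    fun p _ => mem_coe.2 (mem_range.2 (Nat.mod_lt _ hpos))
  have hinj : Set.InjOn crt (range k₁ ×ˢ range k₂ : Finset _) := by
    rintro ⟨a₁, a₂⟩ ha ⟨b₁, b₂⟩ hb (h : _ ≡ _ [MOD k₁ * k₂])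
    simp only [coe_product, coe_range, Set.mem_prod, Set.mem_Iio] at ha hb
    refine Prod.ext (Nat.eq_of_mul_add_mul_modEq hco ha.1 hb.1 (h.of_mul_right k₂)) ?_
    refine Nat.eq_of_mul_add_mul_modEq hco.symm ha.2 hb.2 (c := a₁) (d := b₁) ?_
    simpa only [add_comm] using h.of_mul_left k₁
  refine sum_nbij crt (fun p hp => hmaps hp) hinj
    (surjOn_of_injOn_of_card_le crt hmaps hinj (by simp)) fun p _ => (hf.map_mod_nat _).symm

-- `gaussFactor k` and `jacobiGaussSum m k` are the `ε_k` and `S_m(k)` above.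
noncomputable def gaussFactor (k : ℕ) : ℂ := (1 - I) / 2 + (J(-1 | k) : ℂ) * (1 + I) / 2

noncomputable def jacobiGaussTerm (m : ℤ) (k a : ℕ) : ℂ :=
  (J(a | k) : ℂ) * exp (2 * π * I * a * m / k)

noncomputable def jacobiGaussSum (m : ℤ) (k : ℕ) : ℂ := ∑ a ∈ range k, jacobiGaussTerm m k a

theorem gaussG_eq_gaussFactor_mul (m : ℤ) (k : ℕ) :
    gaussG m k = gaussFactor k * jacobiGaussSum m k := rfl

theorem jacobiGaussTerm_periodic (m : ℤ) (k : ℕ) : Periodic (jacobiGaussTerm m k) k := by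
  intro a
  rcases eq_or_ne k 0 with rfl | hk
  · simp
  have hJ : J(((a + k : ℕ) : ℤ) | k) = J(a | k) :=
    jacobiSym.mod_left' (by push_cast; exact Int.add_emod_right _ _)
  have hexp : 2 * π * I * (a + k : ℕ) * m / k = 2 * π * I * a * m / k + m * (2 * π * I) := by
    push_cast; field_simp
  rw [jacobiGaussTerm, jacobiGaussTerm, hJ, hexp, exp_add, exp_int_mul_two_pi_mul_I, mul_one]

theorem jacobiSym_mul_add_mul (a₁ a₂ : ℤ) {k₁ k₂ : ℕ} (hk₁ : k₁ ≠ 0) (hk₂ : k₂ ≠ 0) :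
    J(a₁ * k₂ + a₂ * k₁ | k₁ * k₂) = J(a₁ | k₁) * J(k₂ | k₁) * (J(a₂ | k₂) * J(k₁ | k₂)) := by
  rw [jacobiSym.mul_right' _ hk₁ hk₂, ← jacobiSym.mul_left, ← jacobiSym.mul_left]
  congr 1 <;> apply jacobiSym.mod_left' <;> simp

theorem jacobiGaussTerm_mul_add_mul (m : ℤ) (a₁ a₂ : ℕ) {k₁ k₂ : ℕ} (hk₁ : k₁ ≠ 0)
    (hk₂ : k₂ ≠ 0) :
    jacobiGaussTerm m (k₁ * k₂) (a₁ * k₂ + a₂ * k₁) =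
      (J(k₂ | k₁) * J(k₁ | k₂) : ℤ) * (jacobiGaussTerm m k₁ a₁ * jacobiGaussTerm m k₂ a₂) := by
  have hJ := jacobiSym_mul_add_mul a₁ a₂ hk₁ hk₂
  have hexp : 2 * π * I * (a₁ * k₂ + a₂ * k₁ : ℕ) * m / (k₁ * k₂ : ℕ) =
      2 * π * I * a₁ * m / k₁ + 2 * π * I * a₂ * m / k₂ := by
    push_cast; field_simp
  simp only [jacobiGaussTerm, hexp, exp_add]
  push_cast at hJ ⊢
  rw [hJ]; push_cast; ring

theorem jacobiGaussSum_mul (m : ℤ) {k₁ k₂ : ℕ} (hk₁ : k₁ ≠ 0) (hk₂ : k₂ ≠ 0)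
    (hco : k₁.Coprime k₂) :
    jacobiGaussSum m (k₁ * k₂) =
      (J(k₂ | k₁) * J(k₁ | k₂) : ℤ) * (jacobiGaussSum m k₁ * jacobiGaussSum m k₂) := by
  rw [jacobiGaussSum, (jacobiGaussTerm_periodic m _).sum_range_mul_of_coprime hco,
    jacobiGaussSum, jacobiGaussSum, sum_mul_sum, mul_sum]
  simp_rw [jacobiGaussTerm_mul_add_mul m _ _ hk₁ hk₂, mul_sum]

theorem jacobiSym_mul_jacobiSym_eq_qrSign {k₁ k₂ : ℕ} (h₁ : Odd k₁) (h₂ : Odd k₂)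
    (hco : k₁.Coprime k₂) : J(k₂ | k₁) * J(k₁ | k₂) = qrSign k₁ k₂ := by
  have hsq : J(k₁ | k₂) ^ 2 = 1 := jacobiSym.sq_one (by rwa [Int.gcd_natCast_natCast])
  rw [jacobiSym.quadratic_reciprocity' h₂ h₁]
  linear_combination qrSign k₁ k₂ * hsq

theorem gaussFactor_mul {k₁ k₂ : ℕ} (h₁ : Odd k₁) (h₂ : Odd k₂) :
    gaussFactor (k₁ * k₂) * qrSign k₁ k₂ = gaussFactor k₁ * gaussFactor k₂ := by
  have : NeZero k₁ := ⟨h₁.pos.ne'⟩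
  have : NeZero k₂ := ⟨h₂.pos.ne'⟩
  have hsign (k : ℕ) : J(-1 | k) = 1 ∨ J(-1 | k) = -1 := jacobiSym.eq_one_or_neg_one (by simp)
  -- `qrSign k₁ k₂ = J((-1/k₁) | k₂)`: both sides are functions of the signs `(-1/k₁)`, `(-1/k₂)`.
  rw [qrSign, ← jacobiSym.at_neg_one h₁, gaussFactor, gaussFactor, gaussFactor,
    jacobiSym.mul_right]
  rcases hsign k₁ with hk₁ | hk₁ <;> rw [hk₁]
  · rw [jacobiSym.one_left]; push_cast; ring
  · rcases hsign k₂ with hk₂ | hk₂ <;> rw [hk₂] <;> push_cast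
    · ring
    · linear_combination -I_sq

theorem gaussG_mul_general (m : ℤ) (k₁ k₂ : ℕ) (h₁ : Odd k₁) (h₂ : Odd k₂)
    (hco : Nat.Coprime k₁ k₂) :
    gaussG m (k₁ * k₂) = gaussG m k₁ * gaussG m k₂ := by
  rw [gaussG_eq_gaussFactor_mul, gaussG_eq_gaussFactor_mul, gaussG_eq_gaussFactor_mul,
    jacobiGaussSum_mul m h₁.pos.ne' h₂.pos.ne' hco, jacobiSym_mul_jacobiSym_eq_qrSign h₁ h₂ hco]
  linear_combination (jacobiGaussSum m k₁ * jacobiGaussSum m k₂) * gaussFactor_mul h₁ h₂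

/-- `G_m` is multiplicative: `G_m(k₁k₂) = G_m(k₁)G_m(k₂)` for coprime odd `k₁, k₂`. -/
theorem gaussG_mul (m : ℤ) (k₁ k₂ : ℕ) (h₁ : Odd k₁) (h₂ : Odd k₂)
    (hp₁ : 0 < k₁) (hp₂ : 0 < k₂) (hco : Nat.Coprime k₁ k₂) :
    gaussG m (k₁ * k₂) = gaussG m k₁ * gaussG m k₂ :=
  gaussG_mul_general m k₁ k₂ h₁ h₂ hco
end

section
/- Let α, β ∈ ℂ with |α| = |β| = 1 and αβ = 1, set λ(p^ν) = ∑_{j=0}^ν α^{ν−j}β^j and σ(p^n) = ∑_{m=0}^n λ(p^m). Then for complex s with Re(s) > 0, ∑_{h=0}^∞ σ(p^{2h}) p^{−sh} = (1 − p^{−s})^{−1} (1 − α² p^{−s})^{−1} (1 − β² p^{−s})^{−1} (1 + (1 + λ(p)) p^{−s}). -/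
/-!
Writing `λ(p^m) y^m = ∑_{j+k=m} (βy)^j (αy)^k` and `σ(p^n) y^n = ∑_{m+k=n} λ(p^m) y^m · y^k` as
Cauchy products gives `∑ σ(p^n) y^n = (1 - βy)⁻¹ (1 - αy)⁻¹ (1 - y)⁻¹` for small `y`. Choosing
`y² = p^{-s}`, the even part `(F(y) + F(-y)) / 2` of this series is the required one, and with
`αβ = 1` it simplifies to the stated rational function of `y²`.
-/

open Finset

theorem hasSum_sum_range_sum_range_mul_pow {𝕜 : Type*} [NormedField 𝕜] [CompleteSpace 𝕜]
    {α β y : 𝕜} (hy : ‖y‖ < 1) (hαy : ‖α * y‖ < 1) (hβy : ‖β * y‖ < 1) :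
    HasSum (fun n => (∑ m ∈ range (n + 1), ∑ j ∈ range (m + 1), α ^ (m - j) * β ^ j) * y ^ n)
      ((1 - β * y)⁻¹ * (1 - α * y)⁻¹ * (1 - y)⁻¹) := by
  have hL := hasSum_sum_range_mul_of_summable_norm (summable_norm_geometric_of_norm_lt_one hβy)
    (summable_norm_geometric_of_norm_lt_one hαy)
  have hσ := hasSum_sum_range_mul_of_summable_norm
    (summable_norm_sum_mul_range_of_summable_norm (summable_norm_geometric_of_norm_lt_one hβy)
      (summable_norm_geometric_of_norm_lt_one hαy))
    (summable_norm_geometric_of_norm_lt_one hy)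
  rw [hL.tsum_eq, tsum_geometric_of_norm_lt_one hy, tsum_geometric_of_norm_lt_one hαy,
    tsum_geometric_of_norm_lt_one hβy] at hσ
  convert hσ using 2 with n
  rw [sum_mul]
  refine sum_congr rfl fun m hm => ?_
  rw [sum_mul, sum_mul]
  refine sum_congr rfl fun j hj => ?_
  rw [mem_range] at hm hj
  rw [show y ^ n = y ^ j * y ^ (m - j) * y ^ (n - m) by
    rw [← pow_add, ← pow_add]; congr 1; omega]
  ring

theorem hasSum_comp_two_mul_mul_sq_pow {K : Type*} [Field K] [TopologicalSpace K]
    [IsTopologicalRing K] [NeZero (2 : K)] {a : ℕ → K} {y A B : K}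
    (hA : HasSum (fun n => a n * y ^ n) A) (hB : HasSum (fun n => a n * (-y) ^ n) B) :
    HasSum (fun h => a (2 * h) * (y ^ 2) ^ h) ((A + B) / 2) := by
  have hodd : ∀ n ∉ Set.range (2 * ·), a n * y ^ n + a n * (-y) ^ n = 0 := by
    intro n hn
    have : Odd n := Nat.not_even_iff_odd.mp fun ⟨k, hk⟩ => hn ⟨k, show 2 * k = n by omega⟩
    rw [this.neg_pow]
    ring
  have := ((mul_right_injective₀ (two_ne_zero' ℕ)).hasSum_iff hodd).2 (hA.add hB)
  convert this.div_const 2 using 2 with h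
  simp only [Function.comp_apply, (even_two_mul h).neg_pow, ← pow_mul]
  field_simp
  ring

theorem even_part_inv_one_sub_mul_three {K : Type*} [Field K] [CharZero K] {α β y : K}
    (hαβ : α * β = 1) (h₁ : 1 - y ≠ 0) (h₁' : 1 + y ≠ 0) (hα : 1 - α * y ≠ 0)
    (hα' : 1 + α * y ≠ 0) (hβ : 1 - β * y ≠ 0) (hβ' : 1 + β * y ≠ 0) :
    ((1 - β * y)⁻¹ * (1 - α * y)⁻¹ * (1 - y)⁻¹ + (1 - β * -y)⁻¹ * (1 - α * -y)⁻¹ * (1 - -y)⁻¹) / 2 =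
      (1 - y ^ 2)⁻¹ * (1 - α ^ 2 * y ^ 2)⁻¹ * (1 - β ^ 2 * y ^ 2)⁻¹ *
        (1 + (1 + (α + β)) * y ^ 2) := by
  rw [show 1 - y ^ 2 = (1 - y) * (1 + y) by ring,
    show 1 - α ^ 2 * y ^ 2 = (1 - α * y) * (1 + α * y) by ring,
    show 1 - β ^ 2 * y ^ 2 = (1 - β * y) * (1 + β * y) by ring]
  simp only [mul_neg, sub_neg_eq_add]
  -- `field_simp` writes the products as `y * α`, `y * β` and needs the hypotheses in that form
  rw [mul_comm α y, mul_comm β y] at *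
  field_simp
  linear_combination (2 * y ^ 2) * hαβ

theorem exists_sq_eq_norm_lt_one {x : ℂ} (hx : ‖x‖ < 1) : ∃ y : ℂ, y ^ 2 = x ∧ ‖y‖ < 1 := by
  obtain ⟨y, rfl⟩ := IsAlgClosed.exists_pow_nat_eq x two_pos
  exact ⟨y, rfl, by simpa [norm_pow] using hx⟩

theorem hasSum_sum_range_two_mul_mul_pow {α β x : ℂ} (hα : ‖α‖ = 1) (hβ : ‖β‖ = 1)
    (hαβ : α * β = 1) (hx : ‖x‖ < 1) :
    HasSum (fun h => (∑ m ∈ range (2 * h + 1), ∑ j ∈ range (m + 1), α ^ (m - j) * β ^ j) * x ^ h)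
      ((1 - x)⁻¹ * (1 - α ^ 2 * x)⁻¹ * (1 - β ^ 2 * x)⁻¹ * (1 + (1 + (α + β)) * x)) := by
  obtain ⟨y, rfl, hy⟩ := exists_sq_eq_norm_lt_one hx
  have hy' : ‖-y‖ < 1 := by rwa [norm_neg]
  have hmul {c z : ℂ} (hc : ‖c‖ = 1) (hz : ‖z‖ < 1) : ‖c * z‖ < 1 := by
    rwa [norm_mul, hc, one_mul]
  have hne {z : ℂ} (hz : ‖z‖ < 1) : 1 - z ≠ 0 ∧ 1 + z ≠ 0 :=
    ⟨(isUnit_one_sub_of_norm_lt_one hz).ne_zero,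
      sub_neg_eq_add 1 z ▸ (isUnit_one_sub_of_norm_lt_one (x := -z) (by rwa [norm_neg])).ne_zero⟩
  have heven := hasSum_comp_two_mul_mul_sq_pow
    (hasSum_sum_range_sum_range_mul_pow hy (hmul hα hy) (hmul hβ hy))
    (hasSum_sum_range_sum_range_mul_pow hy' (hmul hα hy') (hmul hβ hy'))
  rwa [even_part_inv_one_sub_mul_three hαβ (hne hy).1 (hne hy).2 (hne (hmul hα hy)).1
    (hne (hmul hα hy)).2 (hne (hmul hβ hy)).1 (hne (hmul hβ hy)).2] at heven

/-- Local generating-series identity for `∑_h σ(p^{2h}) p^{-sh}`, where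
`λ(p^ν) = ∑_{j≤ν} α^{ν-j}β^j` and `σ(p^n) = ∑_{m≤n} λ(p^m)`. -/
theorem local_series_even (α β : ℂ) (hα : ‖α‖ = 1) (hβ : ‖β‖ = 1)
    (hαβ : α * β = 1) (p : ℕ) (hp : p.Prime) (s : ℂ) (hs : 0 < s.re) :
    (∑' h : ℕ,
        (∑ m ∈ Finset.range (2 * h + 1), ∑ j ∈ Finset.range (m + 1), α ^ (m - j) * β ^ j) *
          ((p : ℂ) ^ (-s)) ^ h) =
      (1 - (p : ℂ) ^ (-s))⁻¹ * (1 - α ^ 2 * (p : ℂ) ^ (-s))⁻¹ *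
        (1 - β ^ 2 * (p : ℂ) ^ (-s))⁻¹ * (1 + (1 + (α + β)) * (p : ℂ) ^ (-s)) := by
  have hx : ‖(p : ℂ) ^ (-s)‖ < 1 := by
    rw [Complex.norm_natCast_cpow_of_pos hp.pos]
    exact Real.rpow_lt_one_of_one_lt_of_neg (by exact_mod_cast hp.one_lt) (by simpa using hs)
  exact (hasSum_sum_range_two_mul_mul_pow hα hβ hαβ hx).tsum_eq
end

section
/- With the same notation (α, β on the unit circle, αβ = 1, λ(p^ν) = ∑_{j=0}^ν α^{ν−j}β^j, σ(p^n) = ∑_{m=0}^n λ(p^m)), for Re(s) > 0 one has ∑_{h=0}^∞ σ(p^{2h+1}) p^{−sh} = (1 − p^{−s})^{−1} (1 − α² p^{−s})^{−1} (1 − β² p^{−s})^{−1} (1 + λ(p) + p^{−s}), where λ(p) = α + β. -/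
/-!
Multiplying `∑ σ(p^{2h+1}) xʰ` successively by `1 - x`, `1 - α²x` and `1 - β²x` replaces its
coefficients by first differences: first by `λ(p^{2h}) + λ(p^{2h+1})`, then, thanks to
`λ(p^{m+2}) = α² λ(p^m) + β^m (1 + β²)` (this is where `αβ = 1` enters), by
`β^{2h-2} (1 + β) (1 + β²)` for `h ≥ 1`, and finally by the coefficients of `1 + λ(p) + x`.
The series converges for `‖x‖ < 1` because `‖σ(p^{2h+1})‖ ≤ (2h+2)²`.
-/

open Finset Asymptotics Filter

theorem HasSum.one_sub_mul_of_coeff {R : Type*} [CommRing R] [TopologicalSpace R]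
    [IsTopologicalRing R] {c d : ℕ → R} {x γ S : R} (hS : HasSum (fun n ↦ c n * x ^ n) S)
    (hd₀ : d 0 = c 0) (hd : ∀ n, d (n + 1) = c (n + 1) - γ * c n) :
    HasSum (fun n ↦ d n * x ^ n) ((1 - γ * x) * S) := by
  have hshift : HasSum (fun n ↦ c (n + 1) * x ^ (n + 1)) (S - c 0) := by
    simpa using (hasSum_nat_add_iff' 1).2 hS
  refine (hasSum_nat_add_iff' 1).1 ?_
  convert hshift.sub (hS.mul_left (γ * x)) using 1
  · ext n; simp only [hd]; ring
  · simp [hd₀]; ring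

section Coefficients

variable {R : Type*} [CommRing R] (α β : R)

-- `lam α β m` is `λ(p^m)` and `sigmaOdd α β h` is `σ(p^{2h+1})`.
def lam (m : ℕ) : R := ∑ j ∈ range (m + 1), α ^ (m - j) * β ^ j

def sigmaOdd (h : ℕ) : R := ∑ m ∈ range (2 * h + 2), lam α β m

def lamPair (h : ℕ) : R := lam α β (2 * h) + lam α β (2 * h + 1)

def lamPairDiff : ℕ → R
  | 0 => 1 + (α + β)
  | h + 1 => β ^ (2 * h) * (1 + β) * (1 + β ^ 2)

def oddNumerator : ℕ → R
  | 0 => 1 + (α + β)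
  | 1 => 1
  | _ + 2 => 0

@[simp] lemma lam_zero : lam α β 0 = 1 := by simp [lam]

@[simp] lemma lam_one : lam α β 1 = α + β := by simp [lam, sum_range_succ]

@[simp] lemma lamPair_zero : lamPair α β 0 = 1 + (α + β) := by simp [lamPair]

@[simp] lemma sigmaOdd_zero : sigmaOdd α β 0 = 1 + (α + β) := by simp [sigmaOdd, sum_range_succ]

variable {α β}

lemma lam_add_two (hαβ : α * β = 1) (m : ℕ) :
    lam α β (m + 2) = α ^ 2 * lam α β m + β ^ m * (1 + β ^ 2) := by
  have hlast : α ^ (m + 2 - (m + 1)) * β ^ (m + 1) = β ^ m := by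
    rw [show m + 2 - (m + 1) = 1 by omega, pow_one, pow_succ', ← mul_assoc, hαβ, one_mul]
  have hfront : ∀ j ∈ range (m + 1), α ^ (m + 2 - j) * β ^ j = α ^ 2 * (α ^ (m - j) * β ^ j) := by
    intro j hj
    rw [show m + 2 - j = m - j + 2 by have := mem_range.1 hj; omega, pow_add]
    ring
  rw [lam, sum_range_succ, sum_range_succ, sum_congr rfl hfront, ← mul_sum, hlast, lam]
  simp only [Nat.sub_self, pow_zero, one_mul]
  ring

lemma lamPair_succ (h : ℕ) : lamPair α β (h + 1) = sigmaOdd α β (h + 1) - sigmaOdd α β h := by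
  rw [lamPair, sigmaOdd, sigmaOdd, show 2 * (h + 1) = 2 * h + 2 by ring, sum_range_succ,
    sum_range_succ]
  ring

lemma lamPairDiff_succ (hαβ : α * β = 1) (h : ℕ) :
    lamPairDiff α β (h + 1) = lamPair α β (h + 1) - α ^ 2 * lamPair α β h := by
  rw [lamPairDiff, lamPair, lamPair, show 2 * (h + 1) = 2 * h + 2 by ring,
    show 2 * h + 2 + 1 = 2 * h + 1 + 2 by ring, lam_add_two hαβ, lam_add_two hαβ]
  ring

lemma oddNumerator_succ (hαβ : α * β = 1) (h : ℕ) :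
    oddNumerator α β (h + 1) = lamPairDiff α β (h + 1) - β ^ 2 * lamPairDiff α β h := by
  rcases h with _ | h
  · simp only [oddNumerator, lamPairDiff, mul_zero, pow_zero, one_mul]
    linear_combination β * hαβ
  · simp only [oddNumerator, lamPairDiff, show 2 * (h + 1) = 2 * h + 2 by ring]
    ring

end Coefficients

lemma one_sub_mul_ne_zero {R : Type*} [SeminormedRing R] [NormOneClass R] {γ x : R}
    (hγ : ‖γ‖ ≤ 1) (hx : ‖x‖ < 1) : 1 - γ * x ≠ 0 := by
  refine sub_ne_zero.2 fun h ↦ ?_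
  have : ‖γ * x‖ < 1 :=
    (norm_mul_le γ x).trans_lt (mul_lt_one_of_nonneg_of_lt_one_right hγ (norm_nonneg _) hx)
  simp [← h] at this

section Convergence

variable {α β x : ℂ}

lemma norm_lam_le (hα : ‖α‖ ≤ 1) (hβ : ‖β‖ ≤ 1) (m : ℕ) : ‖lam α β m‖ ≤ m + 1 := by
  calc ‖lam α β m‖ ≤ ∑ j ∈ range (m + 1), ‖α ^ (m - j) * β ^ j‖ := norm_sum_le _ _
    _ ≤ ∑ j ∈ range (m + 1), (1 : ℝ) := by
        gcongr with j
        rw [norm_mul, norm_pow, norm_pow]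
        exact mul_le_one₀ (pow_le_one₀ (norm_nonneg _) hα) (by positivity)
          (pow_le_one₀ (norm_nonneg _) hβ)
    _ = m + 1 := by simp

lemma norm_sigmaOdd_le (hα : ‖α‖ ≤ 1) (hβ : ‖β‖ ≤ 1) (h : ℕ) :
    ‖sigmaOdd α β h‖ ≤ (2 * h + 2) ^ 2 := by
  calc ‖sigmaOdd α β h‖ ≤ ∑ m ∈ range (2 * h + 2), ‖lam α β m‖ := norm_sum_le _ _
    _ ≤ ∑ m ∈ range (2 * h + 2), (2 * h + 2 : ℝ) := by
        gcongr with m hm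
        have : (m : ℝ) + 1 ≤ 2 * h + 2 := by exact_mod_cast mem_range.1 hm
        exact (norm_lam_le hα hβ m).trans this
    _ = (2 * h + 2) ^ 2 := by simp; ring

lemma summable_sigmaOdd_mul_pow (hα : ‖α‖ ≤ 1) (hβ : ‖β‖ ≤ 1) (hx : ‖x‖ < 1) :
    Summable fun h ↦ sigmaOdd α β h * x ^ h := by
  have hO : sigmaOdd α β =O[atTop] fun h ↦ ((h ^ 2 : ℕ) : ℂ) := by
    refine IsBigO.of_bound 16 ?_
    filter_upwards [eventually_ge_atTop 1] with h hh
    have : (1 : ℝ) ≤ h := by exact_mod_cast hh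
    calc ‖sigmaOdd α β h‖ ≤ (2 * h + 2) ^ 2 := norm_sigmaOdd_le hα hβ h
      _ ≤ 16 * ‖((h ^ 2 : ℕ) : ℂ)‖ := by push_cast; rw [norm_pow, Complex.norm_natCast]; nlinarith
  exact (summable_norm_mul_geometric_of_norm_lt_one' hx hO).of_norm

theorem hasSum_sigmaOdd_mul_pow (hα : ‖α‖ ≤ 1) (hβ : ‖β‖ ≤ 1) (hαβ : α * β = 1) (hx : ‖x‖ < 1) :
    HasSum (fun h ↦ sigmaOdd α β h * x ^ h)
      ((1 - x)⁻¹ * (1 - α ^ 2 * x)⁻¹ * (1 - β ^ 2 * x)⁻¹ * (1 + (α + β) + x)) := by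
  have hS := (summable_sigmaOdd_mul_pow hα hβ hx).hasSum
  have hprod := ((hS.one_sub_mul_of_coeff (by simp) fun h ↦ by rw [one_mul, lamPair_succ]).one_sub_mul_of_coeff
    (lamPair_zero α β).symm (lamPairDiff_succ hαβ)).one_sub_mul_of_coeff
    (d := oddNumerator α β) rfl (oddNumerator_succ hαβ)
  have hnum : HasSum (fun n ↦ oddNumerator α β n * x ^ n) (1 + (α + β) + x) := by
    have : HasSum (fun n ↦ oddNumerator α β n * x ^ n)
        (∑ n ∈ range 2, oddNumerator α β n * x ^ n) := hasSum_sum_of_ne_finset_zero fun n hn ↦ by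
        obtain ⟨n, rfl⟩ : ∃ k, n = k + 2 := ⟨n - 2, by simp at hn; omega⟩
        simp [oddNumerator]
    simpa [sum_range_succ, oddNumerator] using this
  convert hS using 1
  have h1 : 1 - x ≠ 0 := by simpa using one_sub_mul_ne_zero norm_one.le hx
  have h2 := one_sub_mul_ne_zero ((norm_pow α 2).trans_le (pow_le_one₀ (norm_nonneg _) hα)) hx
  have h3 := one_sub_mul_ne_zero ((norm_pow β 2).trans_le (pow_le_one₀ (norm_nonneg _) hβ)) hx
  rw [hnum.unique hprod, one_mul]
  simp only [mul_assoc, inv_mul_cancel_left₀ h1, inv_mul_cancel_left₀ h2, inv_mul_cancel_left₀ h3]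

end Convergence

lemma norm_natCast_cpow_neg_lt_one {p : ℕ} (hp : 1 < p) {s : ℂ} (hs : 0 < s.re) :
    ‖(p : ℂ) ^ (-s)‖ < 1 := by
  rw [Complex.norm_natCast_cpow_of_pos (by omega), Complex.neg_re]
  exact Real.rpow_lt_one_of_one_lt_of_neg (by exact_mod_cast hp) (neg_neg_of_pos hs)

/-- Local generating-series identity for `∑_h σ(p^{2h+1}) p^{-sh}`, where
`λ(p^ν) = ∑_{j≤ν} α^{ν-j}β^j` and `σ(p^n) = ∑_{m≤n} λ(p^m)`. -/
theorem local_series_odd (α β : ℂ) (hα : ‖α‖ = 1) (hβ : ‖β‖ = 1)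
    (hαβ : α * β = 1) (p : ℕ) (hp : p.Prime) (s : ℂ) (hs : 0 < s.re) :
    (∑' h : ℕ,
        (∑ m ∈ Finset.range (2 * h + 2), ∑ j ∈ Finset.range (m + 1), α ^ (m - j) * β ^ j) *
          ((p : ℂ) ^ (-s)) ^ h) =
      (1 - (p : ℂ) ^ (-s))⁻¹ * (1 - α ^ 2 * (p : ℂ) ^ (-s))⁻¹ *
        (1 - β ^ 2 * (p : ℂ) ^ (-s))⁻¹ * (1 + (α + β) + (p : ℂ) ^ (-s)) :=
  (hasSum_sigmaOdd_mul_pow hα.le hβ.le hαβ (norm_natCast_cpow_neg_lt_one hp.one_lt hs)).tsum_eq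
end
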